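/- arXiv:1412.4157 — 2 statements merged into one kernel-verified Lean document; each statement's English description precedes it below -/
import Mathlib

section
/- Let 0 < α < n. There exist constants c(n,α) > 0 and C(n,α) such that for every nonnegative f ∈ L¹_loc(ℝ^n), every x ∈ ℝ^n, and every t ∈ {0, ±1/3}^n, c(n,α) I_α^{D^t} f(x) ≤ I_α f(x) ≤ C(n,α) sup_{t ∈ {0,±1/3}^n} I_α^{D^t} f(x). -/
open MeasureTheory ENNReal Set Filter
open scoped NNReal

noncomputable section

abbrev Eucl (n : ℕ) := EuclideanSpace ℝ (Fin n)

/-- The half-open cube in `ℝⁿ` with corner `a` and side length `h`. -/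
def cube (n : ℕ) (a : Fin n → ℝ) (h : ℝ) : Set (Eucl n) :=
  {x | ∀ i, a i ≤ x i ∧ x i < a i + h}

/-- Average of an `ℝ≥0∞`-valued function over a set (w.r.t. Lebesgue measure). -/
def lavg {n : ℕ} (Q : Set (Eucl n)) (g : Eucl n → ℝ≥0∞) : ℝ≥0∞ :=
  (∫⁻ x in Q, g x) / volume Q

/-- `u(E) = ∫_E u dx` for a weight `u`. -/
def setW {n : ℕ} (u : Eucl n → ℝ) (s : Set (Eucl n)) : ℝ≥0∞ :=
  ∫⁻ x in s, ENNReal.ofReal (u x)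

/-- A weight: nonnegative, measurable, positive on a set of positive measure. -/
def Weight {n : ℕ} (u : Eucl n → ℝ) : Prop :=
  Measurable u ∧ (∀ x, 0 ≤ u x) ∧ 0 < volume {x | 0 < u x}

/-- The fractional maximal operator `M_α`. -/
def maxFn (n : ℕ) (α : ℝ) (f : Eucl n → ℝ) (x : Eucl n) : ℝ≥0∞ :=
  ⨆ (a : Fin n → ℝ) (h : ℝ) (_ : 0 < h) (_ : x ∈ cube n a h),
    volume (cube n a h) ^ (α / (n:ℝ)) * lavg (cube n a h) (fun y => ENNReal.ofReal |f y|)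

/-- The fractional maximal operator restricted to a family of cubes. -/
def maxFnGrid (n : ℕ) (α : ℝ) (D : Set (Set (Eucl n))) (f : Eucl n → ℝ) (x : Eucl n) : ℝ≥0∞ :=
  ⨆ (Q : Set (Eucl n)) (_ : Q ∈ D) (_ : x ∈ Q),
    volume Q ^ (α / (n:ℝ)) * lavg Q (fun y => ENNReal.ofReal |f y|)

/-- The fractional integral `I_α`, as a positive (`ℝ≥0∞`-valued) operator. -/
def fracIntE (n : ℕ) (α : ℝ) (f : Eucl n → ℝ) (x : Eucl n) : ℝ≥0∞ :=
  ∫⁻ y, ENNReal.ofReal (f y) * ENNReal.ofReal (‖x - y‖ ^ (α - (n:ℝ)))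

/-- The dyadic fractional integral associated to a family of cubes. -/
def fracIntGrid (n : ℕ) (α : ℝ) (D : Set (Set (Eucl n))) (f : Eucl n → ℝ) (x : Eucl n) : ℝ≥0∞ :=
  ∑' Q : D, Set.indicator (Q : Set (Eucl n))
    (fun _ => volume (Q : Set (Eucl n)) ^ (α / (n:ℝ)) *
      lavg (Q : Set (Eucl n)) (fun y => ENNReal.ofReal (f y))) x

/-- The standard dyadic grid `Δ`. -/
def stdGrid (n : ℕ) : Set (Set (Eucl n)) :=
  {Q | ∃ (k : ℤ) (m : Fin n → ℤ), Q = cube n (fun i => (2:ℝ) ^ k * (m i : ℝ)) ((2:ℝ) ^ k)}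

/-- The translated dyadic grids `𝒟^t`. -/
def transGrid (n : ℕ) (t : Fin n → ℝ) : Set (Set (Eucl n)) :=
  {Q | ∃ (j : ℤ) (m : Fin n → ℤ), Q = cube n (fun i => (2:ℝ) ^ j * ((m i : ℝ) + t i)) ((2:ℝ) ^ j)}

def thirds : Set ℝ := {0, 1/3, -1/3}

/-- A collection of cubes is a dyadic grid. -/
def IsDyadicGrid (n : ℕ) (D : Set (Set (Eucl n))) : Prop :=
  (∀ Q ∈ D, ∃ (a : Fin n → ℝ) (k : ℤ), Q = cube n a ((2:ℝ) ^ k)) ∧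
  (∀ P ∈ D, ∀ Q ∈ D, P ∩ Q = P ∨ P ∩ Q = Q ∨ P ∩ Q = ∅) ∧
  (∀ (k : ℤ) (x : Eucl n), ∃! Q, Q ∈ D ∧ (∃ a, Q = cube n a ((2:ℝ) ^ k)) ∧ x ∈ Q)

/-- The set `E(Q) = Q \ ⋃ {P ∈ S : P ⊊ Q}`. -/
def sparseE {n : ℕ} (S : Set (Set (Eucl n))) (Q : Set (Eucl n)) : Set (Eucl n) :=
  Q \ ⋃ P ∈ {P | P ∈ S ∧ P ⊂ Q}, P

/-- A sparse family of cubes. -/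
def IsSparse {n : ℕ} (S : Set (Set (Eucl n))) : Prop :=
  ∀ Q ∈ S, volume Q ≤ 2 * volume (sparseE S Q)

/-- The sparse linearized maximal operator `L_α^S`. -/
def sparseL (n : ℕ) (α : ℝ) (S : Set (Set (Eucl n))) (f : Eucl n → ℝ) (x : Eucl n) : ℝ≥0∞ :=
  ∑' Q : S, Set.indicator (sparseE S (Q : Set (Eucl n)))
    (fun _ => volume (Q : Set (Eucl n)) ^ (α / (n:ℝ)) *
      lavg (Q : Set (Eucl n)) (fun y => ENNReal.ofReal (f y))) x

/-- The Calderón–Zygmund cubes: the maximal cubes `Q ∈ Δ` with `⟨|f|⟩_Q > λ`. -/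
def czCubes (n : ℕ) (f : Eucl n → ℝ) (lam : ℝ) : Set (Set (Eucl n)) :=
  {Q | Q ∈ stdGrid n ∧ ENNReal.ofReal lam < lavg Q (fun y => ENNReal.ofReal |f y|) ∧
    ∀ P ∈ stdGrid n, Q ⊆ P →
      ENNReal.ofReal lam < lavg P (fun y => ENNReal.ofReal |f y|) → P = Q}

/-- The one-weight `A_{p,q}` constant, `1 < p`. -/
def apqConst (n : ℕ) (p q : ℝ) (w : Eucl n → ℝ) : ℝ≥0∞ :=
  ⨆ (a : Fin n → ℝ) (h : ℝ) (_ : 0 < h),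
    (lavg (cube n a h) (fun x => ENNReal.ofReal (w x ^ q))) ^ (1/q) *
    (lavg (cube n a h) (fun x => ENNReal.ofReal (w x ^ (-(p/(p-1)))))) ^ (1 - 1/p)

/-- The one-weight `A_{1,q}` constant. -/
def a1qConst (n : ℕ) (q : ℝ) (w : Eucl n → ℝ) : ℝ≥0∞ :=
  ⨆ (a : Fin n → ℝ) (h : ℝ) (_ : 0 < h),
    (lavg (cube n a h) (fun x => ENNReal.ofReal (w x ^ q))) ^ (1/q) *
    essSup (fun x => ENNReal.ofReal (w x)⁻¹) (volume.restrict (cube n a h))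

/-- The two-weight `A_{p,q}^α` constant. -/
def apqAlpha (n : ℕ) (α p q : ℝ) (u σ : Eucl n → ℝ) : ℝ≥0∞ :=
  ⨆ (a : Fin n → ℝ) (h : ℝ) (_ : 0 < h),
    volume (cube n a h) ^ (α / (n:ℝ) + 1/q - 1/p) *
    ((lavg (cube n a h) (fun x => ENNReal.ofReal (u x))) ^ (1/q) *
     (lavg (cube n a h) (fun x => ENNReal.ofReal (σ x))) ^ (1 - 1/p))

/-- Sawyer testing constant for the fractional maximal operator. -/
def maxTestConst (n : ℕ) (α p q : ℝ) (u σ : Eucl n → ℝ) : ℝ≥0∞ :=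
  ⨆ (a : Fin n → ℝ) (h : ℝ) (_ : 0 < h) (_ : 0 < setW σ (cube n a h)),
    setW σ (cube n a h) ^ (-(1/p)) *
    (∫⁻ x in cube n a h,
      (maxFn n α ((cube n a h).indicator σ) x) ^ q * ENNReal.ofReal (u x)) ^ (1/q)

/-- Sawyer testing constant for the fractional integral operator. -/
def fracTestConst (n : ℕ) (α p q : ℝ) (u σ : Eucl n → ℝ) : ℝ≥0∞ :=
  ⨆ (a : Fin n → ℝ) (h : ℝ) (_ : 0 < h) (_ : 0 < setW σ (cube n a h)),
    setW σ (cube n a h) ^ (-(1/p)) *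
    (∫⁻ x in cube n a h,
      (fracIntE n α ((cube n a h).indicator σ) x) ^ q * ENNReal.ofReal (u x)) ^ (1/q)

/-- The BMO seminorm. -/
def bmoNorm (n : ℕ) (b : Eucl n → ℝ) : ℝ≥0∞ :=
  ⨆ (a : Fin n → ℝ) (h : ℝ) (_ : 0 < h),
    lavg (cube n a h) (fun x => ENNReal.ofReal |b x - ⨍ y in cube n a h, b y|)

/-- The commutator `[b, I_α] f`. -/
def commFrac (n : ℕ) (α : ℝ) (b f : Eucl n → ℝ) (x : Eucl n) : ℝ :=
  ∫ y, (b x - b y) * f y * ‖x - y‖ ^ (α - (n:ℝ))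

/-- The dyadic commutator-type operator `C_b^D`. -/
def commGrid (n : ℕ) (α : ℝ) (D : Set (Set (Eucl n))) (b f : Eucl n → ℝ) (x : Eucl n) : ℝ≥0∞ :=
  ∑' Q : D, Set.indicator (Q : Set (Eucl n))
    (fun _ => volume (Q : Set (Eucl n)) ^ (α / (n:ℝ)) *
      lavg (Q : Set (Eucl n)) (fun y => ENNReal.ofReal (|b x - b y| * f y))) x

/-- Young functions. -/
def IsYoung (B : ℝ → ℝ) : Prop :=
  ContinuousOn B (Ici 0) ∧ ConvexOn ℝ (Ici 0) B ∧ StrictMonoOn B (Ici 0) ∧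
  B 0 = 0 ∧ Tendsto (fun t => B t / t) atTop atTop

/-- The associate Young function `B̄(t) = sup_{s>0} (st − B(s))`. -/
def youngConj (B : ℝ → ℝ) (t : ℝ) : ℝ :=
  sSup ((fun s => s * t - B s) '' Ioi 0)

/-- The `B_p` condition: `∫_1^∞ B(t)/t^p dt/t < ∞`. -/
def IsBp (B : ℝ → ℝ) (p : ℝ) : Prop :=
  IntegrableOn (fun t => B t / t ^ (p + 1)) (Ioi 1)

/-- The normalized Luxemburg norm of `f` on the cube `Q`. -/
def luxNorm {n : ℕ} (B : ℝ → ℝ) (Q : Set (Eucl n)) (f : Eucl n → ℝ) : ℝ :=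
  sInf {lam : ℝ | 0 < lam ∧ (⨍ x in Q, B (|f x| / lam)) ≤ 1}

/-- The separated bump constant `[u,σ]_{A_{p,q,B}^α}` (bump on the right). -/
def bumpRight (n : ℕ) (α p q : ℝ) (B : ℝ → ℝ) (u σ : Eucl n → ℝ) : ℝ≥0∞ :=
  ⨆ (a : Fin n → ℝ) (h : ℝ) (_ : 0 < h),
    volume (cube n a h) ^ (α / (n:ℝ) + 1/q - 1/p) *
    ((lavg (cube n a h) (fun x => ENNReal.ofReal (u x))) ^ (1/q) *
     ENNReal.ofReal (luxNorm B (cube n a h) (fun x => σ x ^ ((p-1)/p))))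

/-- The conjoined bump constant `[u,σ]_{A_{p,q,A,B}^α}`. -/
def bumpBoth (n : ℕ) (α p q : ℝ) (A B : ℝ → ℝ) (u σ : Eucl n → ℝ) : ℝ≥0∞ :=
  ⨆ (a : Fin n → ℝ) (h : ℝ) (_ : 0 < h),
    volume (cube n a h) ^ (α / (n:ℝ) + 1/q - 1/p) *
    (ENNReal.ofReal (luxNorm A (cube n a h) (fun x => u x ^ (1/q))) *
     ENNReal.ofReal (luxNorm B (cube n a h) (fun x => σ x ^ ((p-1)/p))))

/-- Strong operator norm of `I_α(·σ) : L^p(σ) → L^q(u)`. -/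
def strongNormI (n : ℕ) (α p q : ℝ) (u σ : Eucl n → ℝ) : ℝ≥0∞ :=
  ⨆ (f : Eucl n → ℝ) (_ : Measurable f)
    (_ : (∫⁻ x, ENNReal.ofReal |f x| ^ p * ENNReal.ofReal (σ x)) ≤ 1),
    (∫⁻ x, (fracIntE n α (fun y => |f y| * σ y) x) ^ q * ENNReal.ofReal (u x)) ^ (1/q)

/-- Weak operator norm of `I_α(·σ) : L^p(σ) → L^{q,∞}(u)`. -/
def weakNormI (n : ℕ) (α p q : ℝ) (u σ : Eucl n → ℝ) : ℝ≥0∞ :=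
  ⨆ (f : Eucl n → ℝ) (_ : Measurable f)
    (_ : (∫⁻ x, ENNReal.ofReal |f x| ^ p * ENNReal.ofReal (σ x)) ≤ 1)
    (t : ℝ) (_ : 0 < t),
    ENNReal.ofReal t *
      (setW u {x | ENNReal.ofReal t < fracIntE n α (fun y => |f y| * σ y) x}) ^ (1/q)

end

/-!
Both operators integrate `f` against a kernel: `I_α` against `‖x - y‖ ^ (α - n)`, and the
dyadic operator of `𝒟^t` against `K_t(x, y) = ∑ⱼ 2 ^ (j (α - n)) 𝟙[y ∈ Qⱼᵗ(x)]`, where `Qⱼᵗ(x)`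
(`gridCube n t j x`) is the cube of `𝒟^t` of side `2 ^ j` containing `x`.

If `y ∈ Qⱼᵗ(x)` then `‖x - y‖ ≤ √n 2 ^ j`, so `K_t(x, y)` is a geometric tail starting near
`‖x - y‖ / √n` and is at most a constant times `‖x - y‖ ^ (α - n)`; this gives the lower bound
for every `t`. Conversely, if `2 ^ k ≤ ‖x - y‖ < 2 ^ (k + 1)`, one of the shifts
`t ∈ {0, ±1/3}ⁿ` puts every coordinate of `x` at distance at least `2 ^ (k + 4) / 6` from the
boundary of `Qₖ₊₄ᵗ(x)`, so `y ∈ Qₖ₊₄ᵗ(x)` and `‖x - y‖ ^ (α - n) ≤ 16 ^ (n - α) K_t(x, y)`.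
Summing over the `3 ^ n` shifts gives the upper bound.
-/

open Function

lemma tsum_ite_le_two_zpow_rpow {β : ℝ} (hβ : β < 0) (k : ℤ) :
    ∑' j : ℤ, (if k ≤ j then ENNReal.ofReal ((2 ^ j : ℝ) ^ β) else 0)
      = ENNReal.ofReal ((2 ^ k : ℝ) ^ β / (1 - 2 ^ β)) := by
  have hρ : (2 : ℝ) ^ β < 1 := Real.rpow_lt_one_of_one_lt_of_neg one_lt_two hβ
  have hshift : Injective fun m : ℕ => k + m := fun m m' h => by simpa using h
  have hsupport : support (fun j : ℤ => if k ≤ j then ENNReal.ofReal ((2 ^ j : ℝ) ^ β) else 0)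
      ⊆ range fun m : ℕ => k + m := by
    intro j hj
    have hkj : k ≤ j := by by_contra h; simp [h] at hj
    exact ⟨(j - k).toNat, by simp only; omega⟩
  have hterm : ∀ m : ℕ, ((2 : ℝ) ^ (k + m)) ^ β = (2 ^ k : ℝ) ^ β * (2 ^ β) ^ m := fun m => by
    rw [zpow_add₀ two_ne_zero, Real.mul_rpow (by positivity) (by positivity), zpow_natCast,
      ← Real.rpow_pow_comm zero_le_two]
  rw [← hshift.tsum_eq hsupport]
  simp only [le_add_iff_nonneg_right, Nat.cast_nonneg, if_true, hterm]
  rw [ENNReal.ofReal_div_of_pos (by linarith), div_eq_mul_inv]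
  simp_rw [ENNReal.ofReal_mul (by positivity : (0 : ℝ) ≤ (2 ^ k : ℝ) ^ β),
    ENNReal.ofReal_pow (by positivity : (0 : ℝ) ≤ 2 ^ β)]
  rw [ENNReal.tsum_mul_left, ENNReal.tsum_geometric, ENNReal.ofReal_sub _ (by positivity),
    ENNReal.ofReal_one]

section Cube

variable {n : ℕ}

lemma cube_eq_preimage (a : Fin n → ℝ) (h : ℝ) :
    cube n a h = (MeasurableEquiv.toLp 2 (Fin n → ℝ)).symm ⁻¹'
      Set.univ.pi fun i => Ico (a i) (a i + h) := by
  ext x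
  simp only [cube, Set.mem_preimage, Set.mem_univ_pi, Set.mem_Ico]
  rfl

lemma measurableSet_cube (a : Fin n → ℝ) (h : ℝ) : MeasurableSet (cube n a h) := by
  rw [cube_eq_preimage]
  exact (MeasurableEquiv.toLp 2 (Fin n → ℝ)).symm.measurable
    (MeasurableSet.univ_pi fun i => measurableSet_Ico)

lemma volume_cube (a : Fin n → ℝ) {h : ℝ} (hh : 0 ≤ h) :
    volume (cube n a h) = ENNReal.ofReal (h ^ n) := by
  rw [cube_eq_preimage,
    (EuclideanSpace.volume_preserving_symm_measurableEquiv_toLp (Fin n)).measure_preimage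
      (MeasurableSet.univ_pi fun i => measurableSet_Ico).nullMeasurableSet,
    volume_pi_pi]
  simp [Real.volume_Ico, ENNReal.ofReal_pow hh]

lemma volume_cube_rpow_mul_lavg (hn : 0 < n) (α : ℝ) (a : Fin n → ℝ) {h : ℝ} (hh : 0 < h)
    (g : Eucl n → ℝ≥0∞) :
    volume (cube n a h) ^ (α / n) * lavg (cube n a h) g
      = ENNReal.ofReal (h ^ (α - n)) * ∫⁻ y in cube n a h, g y := by
  have hhn : 0 < h ^ (n : ℝ) := Real.rpow_pos_of_pos hh _
  have hvol : volume (cube n a h) ^ (α / n) = ENNReal.ofReal (h ^ α) := by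
    rw [volume_cube a hh.le, ← Real.rpow_natCast, ENNReal.ofReal_rpow_of_pos hhn,
      ← Real.rpow_mul hh.le, mul_div_cancel₀ _ (by positivity)]
  rw [lavg, hvol, volume_cube a hh.le, ← Real.rpow_natCast, ENNReal.div_eq_inv_mul,
    ← ENNReal.ofReal_inv_of_pos hhn, ← mul_assoc, ← ENNReal.ofReal_mul (by positivity),
    ← Real.rpow_neg hh.le, ← Real.rpow_add hh, sub_eq_add_neg]

lemma norm_sub_le_of_mem_cube {a : Fin n → ℝ} {h : ℝ} {x y : Eucl n} (hh : 0 ≤ h)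
    (hx : x ∈ cube n a h) (hy : y ∈ cube n a h) : ‖x - y‖ ≤ Real.sqrt n * h := by
  have hcoord : ∀ i, ‖(x - y) i‖ ^ 2 ≤ h ^ 2 := fun i => by
    rw [PiLp.sub_apply, Real.norm_eq_abs, sq_abs]
    nlinarith [hx i, hy i]
  calc ‖x - y‖ = Real.sqrt (∑ i, ‖(x - y) i‖ ^ 2) := EuclideanSpace.norm_eq _
    _ ≤ Real.sqrt (n * h ^ 2) := by
        gcongr
        simpa using Finset.sum_le_sum fun i (_ : i ∈ Finset.univ) => hcoord i
    _ = Real.sqrt n * h := by rw [Real.sqrt_mul n.cast_nonneg, Real.sqrt_sq hh]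

end Cube

section GridCube

variable {n : ℕ}

lemma mem_cube_zpow_iff {j : ℤ} {m : Fin n → ℤ} {t : Fin n → ℝ} {y : Eucl n} :
    y ∈ cube n (fun i => 2 ^ j * (m i + t i)) (2 ^ j) ↔ ∀ i, ⌊y i / 2 ^ j - t i⌋ = m i := by
  have h2j : (0 : ℝ) < 2 ^ j := zpow_pos two_pos j
  refine forall_congr' fun i => ?_
  rw [Int.floor_eq_iff, le_sub_iff_add_le, sub_lt_iff_lt_add, le_div_iff₀ h2j,
    div_lt_iff₀ h2j]
  constructor <;> rintro ⟨h1, h2⟩ <;> constructor <;> linarith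

def gridCube (n : ℕ) (t : Fin n → ℝ) (j : ℤ) (x : Eucl n) : Set (Eucl n) :=
  cube n (fun i => 2 ^ j * (⌊x i / 2 ^ j - t i⌋ + t i)) (2 ^ j)

lemma mem_gridCube_iff {t : Fin n → ℝ} {j : ℤ} {x y : Eucl n} :
    y ∈ gridCube n t j x ↔ ∀ i, ⌊y i / 2 ^ j - t i⌋ = ⌊x i / 2 ^ j - t i⌋ :=
  mem_cube_zpow_iff

lemma mem_gridCube_self (t : Fin n → ℝ) (j : ℤ) (x : Eucl n) : x ∈ gridCube n t j x :=
  mem_gridCube_iff.2 fun _ => rfl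

lemma gridCube_mem_transGrid (t : Fin n → ℝ) (j : ℤ) (x : Eucl n) :
    gridCube n t j x ∈ transGrid n t :=
  ⟨j, fun i => ⌊x i / 2 ^ j - t i⌋, rfl⟩

lemma measurableSet_gridCube (t : Fin n → ℝ) (j : ℤ) (x : Eucl n) :
    MeasurableSet (gridCube n t j x) :=
  measurableSet_cube _ _

lemma exists_eq_gridCube {t : Fin n → ℝ} {Q : Set (Eucl n)} (hQ : Q ∈ transGrid n t)
    {x : Eucl n} (hx : x ∈ Q) : ∃ j : ℤ, Q = gridCube n t j x := by
  obtain ⟨j, m, rfl⟩ := hQ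
  have hm := mem_cube_zpow_iff.1 hx
  refine ⟨j, ?_⟩
  simp only [gridCube, hm]

lemma gridCube_injective (hn : 0 < n) (t : Fin n → ℝ) (x : Eucl n) :
    Injective fun j => gridCube n t j x := by
  intro j j' hjj'
  have hvol := congrArg volume hjj'
  simp only [gridCube] at hvol
  rw [volume_cube _ (zpow_pos two_pos j).le, volume_cube _ (zpow_pos two_pos j').le,
    ENNReal.ofReal_eq_ofReal_iff (by positivity) (by positivity),
    pow_left_inj₀ (zpow_pos two_pos j).le (zpow_pos two_pos j').le hn.ne'] at hvol
  exact zpow_right_injective₀ two_pos (by norm_num) hvol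

lemma exists_mem_thirds_floor_sub_eq (w : ℝ) :
    ∃ s ∈ thirds, ∀ v : ℝ, |v - w| < 1 / 6 → ⌊v - s⌋ = ⌊w⌋ := by
  have h0 := Int.floor_le w
  have h1 := Int.lt_floor_add_one w
  have key : ∃ s ∈ thirds, (⌊w⌋ : ℝ) + 1 / 6 ≤ w - s ∧ w - s ≤ ⌊w⌋ + 5 / 6 := by
    rcases lt_or_ge (w - ⌊w⌋) (1 / 6) with hlt | hge
    · exact ⟨-1 / 3, by simp [thirds], by linarith, by linarith⟩
    rcases le_or_gt (w - ⌊w⌋) (5 / 6) with hle | hgt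
    · exact ⟨0, by simp [thirds], by linarith, by linarith⟩
    · exact ⟨1 / 3, by simp [thirds], by linarith, by linarith⟩
  obtain ⟨s, hs, hlo, hhi⟩ := key
  refine ⟨s, hs, fun v hv => ?_⟩
  rw [Int.floor_eq_iff]
  constructor <;> linarith [(abs_lt.1 hv).1, (abs_lt.1 hv).2]

lemma exists_thirds_ball_subset_gridCube (x : Eucl n) (j : ℤ) :
    ∃ t : Fin n → ℝ, (∀ i, t i ∈ thirds) ∧
      ∀ y : Eucl n, ‖y - x‖ < 2 ^ j / 6 → y ∈ gridCube n t j x := by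
  choose t ht hfloor using fun i => exists_mem_thirds_floor_sub_eq (x i / 2 ^ j)
  refine ⟨t, ht, fun y hy => mem_gridCube_iff.2 fun i => ?_⟩
  have h2j : (0 : ℝ) < 2 ^ j := zpow_pos two_pos j
  have hclose : |y i / 2 ^ j - x i / 2 ^ j| < 1 / 6 := by
    rw [← sub_div, abs_div, abs_of_pos h2j, div_lt_iff₀ h2j]
    calc |y i - x i| ≤ ‖y - x‖ := by simpa using PiLp.norm_apply_le (y - x) i
      _ < 2 ^ j / 6 := hy
      _ = 1 / 6 * 2 ^ j := by ring
  rw [hfloor i _ hclose, hfloor i _ (by simp)]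

end GridCube

section Kernel

variable {n : ℕ}

noncomputable def gridKernel (n : ℕ) (α : ℝ) (t : Fin n → ℝ) (x y : Eucl n) : ℝ≥0∞ :=
  ∑' j : ℤ, (gridCube n t j x).indicator (fun _ => ENNReal.ofReal ((2 ^ j : ℝ) ^ (α - n))) y

lemma measurable_gridKernel (α : ℝ) (t : Fin n → ℝ) (x : Eucl n) :
    Measurable (gridKernel n α t x) :=
  Measurable.tsum fun j => measurable_const.indicator (measurableSet_gridCube t j x)

lemma fracIntGrid_transGrid_eq_tsum (hn : 0 < n) (α : ℝ) (t : Fin n → ℝ) (f : Eucl n → ℝ)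
    (x : Eucl n) :
    fracIntGrid n α (transGrid n t) f x
      = ∑' j : ℤ, ENNReal.ofReal ((2 ^ j : ℝ) ^ (α - n))
          * ∫⁻ y in gridCube n t j x, ENNReal.ofReal (f y) := by
  let Q : ℤ → transGrid n t := fun j => ⟨gridCube n t j x, gridCube_mem_transGrid t j x⟩
  have hQ : Injective Q := fun j j' h =>
    gridCube_injective hn t x (congrArg Subtype.val h)
  have hsupport : support (fun P : transGrid n t => (P : Set (Eucl n)).indicator
      (fun _ => volume (P : Set (Eucl n)) ^ (α / n)
        * lavg P (fun y => ENNReal.ofReal (f y))) x) ⊆ range Q := by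
    rintro ⟨P, hP⟩ hx
    obtain ⟨j, rfl⟩ := exists_eq_gridCube hP (Set.mem_of_indicator_ne_zero hx)
    exact ⟨j, rfl⟩
  rw [fracIntGrid, ← hQ.tsum_eq hsupport]
  refine tsum_congr fun j => ?_
  rw [Set.indicator_of_mem (mem_gridCube_self t j x)]
  exact volume_cube_rpow_mul_lavg hn α _ (zpow_pos two_pos j) _

lemma fracIntGrid_transGrid_eq_lintegral (hn : 0 < n) (α : ℝ) (t : Fin n → ℝ)
    {f : Eucl n → ℝ} (hf : AEMeasurable f) (x : Eucl n) :
    fracIntGrid n α (transGrid n t) f x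
      = ∫⁻ y, ENNReal.ofReal (f y) * gridKernel n α t x y := by
  have hf' : AEMeasurable fun y => ENNReal.ofReal (f y) :=
    ENNReal.measurable_ofReal.comp_aemeasurable hf
  have hmul : ∀ (j : ℤ) y, ENNReal.ofReal (f y) * (gridCube n t j x).indicator
      (fun _ => ENNReal.ofReal ((2 ^ j : ℝ) ^ (α - n))) y
        = (gridCube n t j x).indicator
          (fun y => ENNReal.ofReal (f y) * ENNReal.ofReal ((2 ^ j : ℝ) ^ (α - n))) y :=
    fun j y => by rw [Set.indicator_mul_right]
  simp_rw [fracIntGrid_transGrid_eq_tsum hn, gridKernel, ← ENNReal.tsum_mul_left, hmul]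
  rw [lintegral_tsum fun j => (hf'.mul_const _).indicator (measurableSet_gridCube t j x)]
  refine tsum_congr fun j => ?_
  rw [lintegral_indicator (measurableSet_gridCube t j x),
    lintegral_mul_const' _ _ ENNReal.ofReal_ne_top, mul_comm]

lemma ofReal_mul_gridKernel_le (hn : 0 < n) {α : ℝ} (hαn : α < n) (t : Fin n → ℝ)
    {x y : Eucl n} (hxy : y ≠ x) :
    ENNReal.ofReal (Real.sqrt n ^ (α - n) * (1 - 2 ^ (α - n))) * gridKernel n α t x y
      ≤ ENNReal.ofReal (‖x - y‖ ^ (α - n)) := by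
  have hβ : α - n < 0 := by linarith
  have hρ : (2 : ℝ) ^ (α - n) < 1 := Real.rpow_lt_one_of_one_lt_of_neg one_lt_two hβ
  have hr : 0 < ‖x - y‖ := norm_pos_iff.2 (sub_ne_zero.2 hxy.symm)
  have hsqrt : 0 < Real.sqrt n := Real.sqrt_pos.2 (by exact_mod_cast hn)
  obtain ⟨k, hk, hk'⟩ := exists_mem_Ioc_zpow (div_pos hr hsqrt) one_lt_two
  rw [div_le_iff₀' hsqrt] at hk'
  have hkernel : gridKernel n α t x y
      ≤ ∑' j : ℤ, if k + 1 ≤ j then ENNReal.ofReal ((2 ^ j : ℝ) ^ (α - n)) else 0 := by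
    refine ENNReal.tsum_le_tsum fun j => ?_
    by_cases hyQ : y ∈ gridCube n t j x
    · have hdiam : ‖x - y‖ ≤ Real.sqrt n * 2 ^ j :=
        norm_sub_le_of_mem_cube (zpow_pos two_pos j).le (mem_gridCube_self t j x) hyQ
      have hkj : k < j := (zpow_lt_zpow_iff_right₀ (by norm_num : (1 : ℝ) < 2)).1
        (hk.trans_le ((div_le_iff₀' hsqrt).2 hdiam))
      rw [Set.indicator_of_mem hyQ, if_pos (Int.add_one_le_of_lt hkj)]
    · rw [Set.indicator_of_notMem hyQ]
      exact zero_le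
  calc _ ≤ ENNReal.ofReal (Real.sqrt n ^ (α - n) * (1 - 2 ^ (α - n)))
        * ENNReal.ofReal ((2 ^ (k + 1) : ℝ) ^ (α - n) / (1 - 2 ^ (α - n))) := by
        rw [← tsum_ite_le_two_zpow_rpow hβ]
        gcongr
    _ = ENNReal.ofReal ((Real.sqrt n * 2 ^ (k + 1)) ^ (α - n)) := by
        rw [← ENNReal.ofReal_mul (by positivity), Real.mul_rpow hsqrt.le (by positivity)]
        have hρ' : 1 - (2 : ℝ) ^ (α - n) ≠ 0 := by linarith
        congr 1
        field_simp
    _ ≤ ENNReal.ofReal (‖x - y‖ ^ (α - n)) :=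
        ENNReal.ofReal_le_ofReal (Real.rpow_le_rpow_of_nonpos hr hk' hβ.le)

end Kernel

section Shifts

variable {n : ℕ}

noncomputable def thirdsShifts (n : ℕ) : Finset (Fin n → ℝ) :=
  Fintype.piFinset fun _ => {0, 1 / 3, -1 / 3}

lemma mem_thirdsShifts {t : Fin n → ℝ} : t ∈ thirdsShifts n ↔ ∀ i, t i ∈ thirds := by
  simp [thirdsShifts, thirds]

lemma card_thirdsShifts_le (n : ℕ) : (thirdsShifts n).card ≤ 3 ^ n := by
  rw [thirdsShifts, Fintype.card_piFinset, Finset.prod_const, Finset.card_univ,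
    Fintype.card_fin]
  exact Nat.pow_le_pow_left Finset.card_le_three n

lemma ofReal_rpow_norm_sub_le_sum_gridKernel {α : ℝ} (hαn : α < n) {x y : Eucl n}
    (hxy : y ≠ x) :
    ENNReal.ofReal (‖x - y‖ ^ (α - n))
      ≤ ENNReal.ofReal (16 ^ (n - α)) * ∑ t ∈ thirdsShifts n, gridKernel n α t x y := by
  have hβ : α - n < 0 := by linarith
  have hr : 0 < ‖x - y‖ := norm_pos_iff.2 (sub_ne_zero.2 hxy.symm)
  obtain ⟨k, hk, hk'⟩ := exists_mem_Ico_zpow hr (by norm_num : (1 : ℝ) < 2)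
  obtain ⟨t, ht, hball⟩ := exists_thirds_ball_subset_gridCube x (k + 4)
  have h16 : (2 : ℝ) ^ (k + 4) = 2 ^ k * 16 := by rw [zpow_add₀ two_ne_zero]; norm_num
  have hyQ : y ∈ gridCube n t (k + 4) x := by
    refine hball y ?_
    rw [norm_sub_rev, h16]
    calc ‖x - y‖ < 2 ^ (k + 1) := hk'
      _ ≤ 2 ^ k * 16 / 6 := by
        rw [zpow_add_one₀ two_ne_zero]
        linarith [zpow_pos (two_pos : (0 : ℝ) < 2) k]
  calc ENNReal.ofReal (‖x - y‖ ^ (α - n))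
      ≤ ENNReal.ofReal ((2 ^ k : ℝ) ^ (α - n)) :=
        ENNReal.ofReal_le_ofReal (Real.rpow_le_rpow_of_nonpos (zpow_pos two_pos k) hk hβ.le)
    _ = ENNReal.ofReal (16 ^ (n - α)) * ENNReal.ofReal ((2 ^ (k + 4) : ℝ) ^ (α - n)) := by
        rw [← ENNReal.ofReal_mul (by positivity), h16, Real.mul_rpow (by positivity)
          (by norm_num), mul_left_comm, ← Real.rpow_add (by norm_num)]
        simp
    _ ≤ ENNReal.ofReal (16 ^ (n - α)) * gridKernel n α t x y := by
        gcongr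
        rw [← Set.indicator_of_mem hyQ (fun _ => ENNReal.ofReal ((2 ^ (k + 4) : ℝ) ^ (α - n)))]
        exact ENNReal.le_tsum (k + 4)
    _ ≤ ENNReal.ofReal (16 ^ (n - α)) * ∑ t ∈ thirdsShifts n, gridKernel n α t x y := by
        gcongr
        exact Finset.single_le_sum (f := fun s => gridKernel n α s x y) (fun _ _ => zero_le)
          (mem_thirdsShifts.2 ht)

end Shifts

section Domination

variable {n : ℕ} {α : ℝ}

lemma ofReal_mul_fracIntGrid_le_fracIntE (hn : 0 < n) (hαn : α < n) (t : Fin n → ℝ)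
    {f : Eucl n → ℝ} (hf : AEMeasurable f) (x : Eucl n) :
    ENNReal.ofReal (Real.sqrt n ^ (α - n) * (1 - 2 ^ (α - n)))
        * fracIntGrid n α (transGrid n t) f x ≤ fracIntE n α f x := by
  have : Nonempty (Fin n) := ⟨⟨0, hn⟩⟩
  rw [fracIntGrid_transGrid_eq_lintegral hn α t hf,
    ← lintegral_const_mul' _ _ ENNReal.ofReal_ne_top, fracIntE]
  refine lintegral_mono_ae ?_
  filter_upwards [Measure.ae_ne volume x] with y hy
  rw [mul_left_comm]
  gcongr
  exact ofReal_mul_gridKernel_le hn hαn t hy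

lemma fracIntE_le_mul_iSup_fracIntGrid (hn : 0 < n) (hαn : α < n) {f : Eucl n → ℝ}
    (hf : AEMeasurable f) (x : Eucl n) :
    fracIntE n α f x ≤ ENNReal.ofReal (16 ^ (n - α) * 3 ^ n) *
      ⨆ (s : Fin n → ℝ) (_ : ∀ i, s i ∈ thirds), fracIntGrid n α (transGrid n s) f x := by
  have : Nonempty (Fin n) := ⟨⟨0, hn⟩⟩
  set S := ⨆ (s : Fin n → ℝ) (_ : ∀ i, s i ∈ thirds), fracIntGrid n α (transGrid n s) f x
  have hS : ∀ t ∈ thirdsShifts n, fracIntGrid n α (transGrid n t) f x ≤ S := fun t ht =>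
    le_iSup₂_of_le t (mem_thirdsShifts.1 ht) le_rfl
  have hf' : AEMeasurable fun y => ENNReal.ofReal (f y) :=
    ENNReal.measurable_ofReal.comp_aemeasurable hf
  calc fracIntE n α f x
      ≤ ∫⁻ y, ENNReal.ofReal (f y) * (ENNReal.ofReal (16 ^ (n - α))
          * ∑ t ∈ thirdsShifts n, gridKernel n α t x y) := by
        refine lintegral_mono_ae ?_
        filter_upwards [Measure.ae_ne volume x] with y hy
        gcongr
        exact ofReal_rpow_norm_sub_le_sum_gridKernel hαn hy
    _ = ENNReal.ofReal (16 ^ (n - α))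
          * ∑ t ∈ thirdsShifts n, fracIntGrid n α (transGrid n t) f x := by
        simp_rw [mul_left_comm (ENNReal.ofReal (f _)), Finset.mul_sum,
          fracIntGrid_transGrid_eq_lintegral hn α _ hf]
        rw [lintegral_finsetSum' _ fun t _ => by
          have := measurable_gridKernel α t x
          fun_prop]
        exact Finset.sum_congr rfl fun t _ => lintegral_const_mul' _ _ ENNReal.ofReal_ne_top
    _ ≤ ENNReal.ofReal (16 ^ (n - α)) * ((thirdsShifts n).card * S) := by
        gcongr
        exact (Finset.sum_le_card_nsmul _ _ _ hS).trans_eq (nsmul_eq_mul _ _)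
    _ ≤ ENNReal.ofReal (16 ^ (n - α)) * (3 ^ n * S) := by
        gcongr
        exact_mod_cast card_thirdsShifts_le n
    _ = ENNReal.ofReal (16 ^ (n - α) * 3 ^ n) * S := by
        rw [ENNReal.ofReal_mul (by positivity), ENNReal.ofReal_pow (by norm_num), mul_assoc]
        norm_num

end Domination

theorem statement3_general (n : ℕ) (hn : 0 < n) (α : ℝ) (hαn : α < n) :
    ∃ c C : ℝ≥0, 0 < c ∧ 0 < C ∧
      ∀ f : Eucl n → ℝ, LocallyIntegrable f volume → (∀ y, 0 ≤ f y) →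
        ∀ x : Eucl n, ∀ t : Fin n → ℝ, (∀ i, t i ∈ thirds) →
          (c : ℝ≥0∞) * fracIntGrid n α (transGrid n t) f x ≤ fracIntE n α f x ∧
          fracIntE n α f x ≤
            (C : ℝ≥0∞) * ⨆ (s : Fin n → ℝ) (_ : ∀ i, s i ∈ thirds),
              fracIntGrid n α (transGrid n s) f x := by
  have hρ : (2 : ℝ) ^ (α - n) < 1 :=
    Real.rpow_lt_one_of_one_lt_of_neg (by norm_num) (by linarith)
  have hsqrt : 0 < Real.sqrt n := Real.sqrt_pos.2 (by exact_mod_cast hn)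
  refine ⟨(Real.sqrt n ^ (α - n) * (1 - 2 ^ (α - n))).toNNReal,
    ((16 : ℝ) ^ ((n : ℝ) - α) * 3 ^ n).toNNReal,
    Real.toNNReal_pos.2 (mul_pos (Real.rpow_pos_of_pos hsqrt _) (sub_pos.2 hρ)),
    Real.toNNReal_pos.2 (by positivity), fun f hf _ x t _ => ?_⟩
  have hf' : AEMeasurable f := hf.aestronglyMeasurable.aemeasurable
  exact ⟨ofReal_mul_fracIntGrid_le_fracIntE hn hαn t hf' x,
    fracIntE_le_mul_iSup_fracIntGrid hn hαn hf' x⟩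

/-- dyadic domination of the fractional integral. -/
theorem statement3 (n : ℕ) (hn : 0 < n) (α : ℝ) (hα0 : 0 < α) (hαn : α < n) :
    ∃ c C : ℝ≥0, 0 < c ∧ 0 < C ∧
      ∀ f : Eucl n → ℝ, LocallyIntegrable f volume → (∀ y, 0 ≤ f y) →
        ∀ x : Eucl n, ∀ t : Fin n → ℝ, (∀ i, t i ∈ thirds) →
          (c : ℝ≥0∞) * fracIntGrid n α (transGrid n t) f x ≤ fracIntE n α f x ∧
          fracIntE n α f x ≤
            (C : ℝ≥0∞) * ⨆ (s : Fin n → ℝ) (_ : ∀ i, s i ∈ thirds),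
              fracIntGrid n α (transGrid n s) f x :=
  statement3_general n hn α hαn
end

section
/- Let n = 1, 1 < p ≤ q < ∞, and 0 < α < 1. There exist a pair of weights (u, σ) on ℝ with (u, σ) ∈ A_{p,q}^α and a nonnegative function f ∈ L^p(σ) such that M_α(fσ) ∉ L^q(u), i.e. ∫_ℝ M_α(fσ)^q u dx = ∞. In particular, the two-weight A_{p,q}^α condition is not sufficient for the strong type inequality M_α(·σ) : L^p(σ) → L^q(u). -/
/-!
Take `σ = 1_{[0,1)}`, `f = 1` and `u(t) = t ^ ((1 - α) q - 1)` for `t ≥ 2`, `u = 0` otherwise.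
An interval `I` meets the supports of both weights only if `|I| > 1` and `I ⊆ [0, 2|I|)`; then
`u(I) ≲ |I| ^ ((1 - α) q)` and `σ(I) ≤ 1`, and the exponent of `u` is chosen exactly so that the
powers of `|I|` in `|I| ^ (α + 1/q - 1/p) ⟨u⟩_I ^ (1/q) ⟨σ⟩_I ^ (1/p')` cancel. On the other hand
the interval `[0, x + 1)` gives `M_α σ (x) ≥ (x + 1) ^ (α - 1)`, so `M_α σ (x) ^ q u(x) ≳ 1 / x` on
`[2, ∞)`, which is not integrable.
-/

open MeasureTheory ENNReal Set Filter
open scoped NNReal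

def euclOneEquiv : Eucl 1 ≃ᵐ ℝ :=
  (MeasurableEquiv.toLp 2 (Fin 1 → ℝ)).symm.trans (MeasurableEquiv.funUnique (Fin 1) ℝ)

lemma euclOneEquiv_apply (x : Eucl 1) : euclOneEquiv x = x 0 := rfl

lemma measurePreserving_euclOneEquiv : MeasurePreserving euclOneEquiv :=
  (volume_preserving_funUnique (Fin 1) ℝ).comp
    (EuclideanSpace.volume_preserving_symm_measurableEquiv_toLp _)

lemma cube_one_eq_preimage (a : Fin 1 → ℝ) (h : ℝ) :
    cube 1 a h = euclOneEquiv ⁻¹' Ico (a 0) (a 0 + h) := by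
  ext x
  simp [cube, euclOneEquiv_apply, Fin.forall_fin_one]

lemma volume_cube_one (a : Fin 1 → ℝ) (h : ℝ) : volume (cube 1 a h) = ENNReal.ofReal h := by
  rw [cube_one_eq_preimage, measurePreserving_euclOneEquiv.measure_preimage_equiv,
    Real.volume_Ico, add_sub_cancel_left]

lemma lintegral_comp_euclOneEquiv (g : ℝ → ℝ≥0∞) : ∫⁻ x : Eucl 1, g (x 0) = ∫⁻ t, g t :=
  measurePreserving_euclOneEquiv.lintegral_comp_emb euclOneEquiv.measurableEmbedding g

lemma setLIntegral_preimage_euclOneEquiv (g : ℝ → ℝ≥0∞) (s : Set ℝ) :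
    ∫⁻ x in euclOneEquiv ⁻¹' s, g (x 0) = ∫⁻ t in s, g t :=
  measurePreserving_euclOneEquiv.setLIntegral_comp_preimage_emb
    euclOneEquiv.measurableEmbedding g s

lemma setLIntegral_cube_one (g : ℝ → ℝ≥0∞) (a : Fin 1 → ℝ) (h : ℝ) :
    ∫⁻ x in cube 1 a h, g (x 0) = ∫⁻ t in Ico (a 0) (a 0 + h), g t := by
  rw [cube_one_eq_preimage, setLIntegral_preimage_euclOneEquiv]

lemma weight_comp_euclOneEquiv {w : ℝ → ℝ} (hw : Measurable w) (hw0 : ∀ t, 0 ≤ w t)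
    {s : Set ℝ} (hs : 0 < volume s) (hpos : ∀ t ∈ s, 0 < w t) :
    Weight (fun x : Eucl 1 => w (x 0)) := by
  refine ⟨hw.comp euclOneEquiv.measurable, fun _ => hw0 _, hs.trans_le ?_⟩
  rw [← measurePreserving_euclOneEquiv.measure_preimage_equiv s]
  exact measure_mono fun x hx => hpos _ hx

lemma le_maxFn {n : ℕ} (α : ℝ) (f : Eucl n → ℝ) {a : Fin n → ℝ} {h : ℝ} (hh : 0 < h)
    {x : Eucl n} (hx : x ∈ cube n a h) :
    volume (cube n a h) ^ (α / n) * lavg (cube n a h) (fun y => ENNReal.ofReal |f y|) ≤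
      maxFn n α f x := by
  unfold maxFn
  exact le_iSup₂_of_le a h (le_iSup₂_of_le hh hx le_rfl)

lemma lintegral_Ioc_rpow {β b : ℝ} (hβ : -1 < β) (hb : 0 ≤ b) :
    ∫⁻ t in Ioc 0 b, ENNReal.ofReal (t ^ β) = ENNReal.ofReal (b ^ (β + 1) / (β + 1)) := by
  have hint : IntegrableOn (fun t => t ^ β) (Ioc 0 b) :=
    (intervalIntegrable_iff_integrableOn_Ioc_of_le hb).1
      (intervalIntegral.intervalIntegrable_rpow' hβ)
  rw [← ofReal_integral_eq_lintegral_ofReal hint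
      ((ae_restrict_iff' measurableSet_Ioc).2 (ae_of_all _ fun t ht => Real.rpow_nonneg ht.1.le β)),
    ← intervalIntegral.integral_of_le hb, integral_rpow (Or.inl hβ),
    Real.zero_rpow (by linarith), sub_zero]

lemma lintegral_Ici_inv_eq_top {a : ℝ} (ha : 0 ≤ a) : ∫⁻ t in Ici a, ENNReal.ofReal t⁻¹ = ⊤ := by
  by_contra hfin
  refine not_integrableOn_Ici_inv (a := a) ⟨measurable_inv.aestronglyMeasurable, ?_⟩
  rw [hasFiniteIntegral_iff_ofReal
    ((ae_restrict_iff' measurableSet_Ici).2 (ae_of_all _ fun t ht => inv_nonneg.2 (ha.trans ht)))]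
  exact lt_top_iff_ne_top.2 hfin

noncomputable def indicatorUnit : ℝ → ℝ := (Ico 0 1).indicator 1

noncomputable def powerTail (β : ℝ) : ℝ → ℝ := (Ici 2).indicator fun t => t ^ β

lemma indicatorUnit_nonneg (t : ℝ) : 0 ≤ indicatorUnit t :=
  indicator_nonneg (fun _ _ => zero_le_one) t

lemma powerTail_nonneg (β t : ℝ) : 0 ≤ powerTail β t :=
  indicator_nonneg (fun _ ht => Real.rpow_nonneg (zero_le_two.trans ht) β) t

lemma ofReal_indicatorUnit (t : ℝ) :
    ENNReal.ofReal (indicatorUnit t) = (Ico 0 1).indicator 1 t := by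
  by_cases ht : t ∈ Ico (0 : ℝ) 1 <;> simp [indicatorUnit, ht]

lemma ofReal_powerTail (β t : ℝ) :
    ENNReal.ofReal (powerTail β t) = (Ici 2).indicator (fun t => ENNReal.ofReal (t ^ β)) t := by
  by_cases ht : t ∈ Ici (2 : ℝ) <;> simp [powerTail, ht]

lemma setLIntegral_indicatorUnit (s : Set ℝ) :
    ∫⁻ t in s, ENNReal.ofReal (indicatorUnit t) = volume (Ico 0 1 ∩ s) := by
  simp_rw [ofReal_indicatorUnit]
  rw [lintegral_indicator_one measurableSet_Ico, Measure.restrict_apply measurableSet_Ico]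

lemma setLIntegral_powerTail (β : ℝ) (s : Set ℝ) :
    ∫⁻ t in s, ENNReal.ofReal (powerTail β t) = ∫⁻ t in Ici 2 ∩ s, ENNReal.ofReal (t ^ β) := by
  simp_rw [ofReal_powerTail]
  exact setLIntegral_indicator measurableSet_Ici _

lemma setLIntegral_powerTail_le {β b : ℝ} (hβ : -1 < β) (hb : 0 ≤ b) {s : Set ℝ}
    (hs : s ⊆ Iio b) :
    ∫⁻ t in s, ENNReal.ofReal (powerTail β t) ≤ ENNReal.ofReal (b ^ (β + 1) / (β + 1)) := by
  rw [setLIntegral_powerTail, ← lintegral_Ioc_rpow hβ hb]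
  exact lintegral_mono_set fun t (ht : t ∈ Ici 2 ∩ s) => ⟨zero_lt_two.trans_le ht.1, (hs ht.2).le⟩

lemma weight_indicatorUnit : Weight (fun x : Eucl 1 => indicatorUnit (x 0)) :=
  weight_comp_euclOneEquiv (measurable_const.indicator measurableSet_Ico) indicatorUnit_nonneg
    (s := Ico 0 1) (by simp) fun t ht => by simp [indicatorUnit, ht]

lemma weight_powerTail (β : ℝ) : Weight (fun x : Eucl 1 => powerTail β (x 0)) :=
  weight_comp_euclOneEquiv ((measurable_id.pow_const β).indicator measurableSet_Ici)
    (powerTail_nonneg β) (s := Ici 2) (by simp) fun t ht => by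
      simpa [powerTail, ht] using Real.rpow_pos_of_pos (zero_lt_two.trans_le ht) β

lemma apqAlpha_summand_bound_eq {α p q h : ℝ} (hq : q ≠ 0) (hh : 0 < h) (hγ : 0 < (1 - α) * q) :
    h ^ (α + 1 / q - 1 / p) *
      (((2 * h) ^ ((1 - α) * q) / ((1 - α) * q) / h) ^ (1 / q) * (1 / h) ^ (1 - 1 / p)) =
    (2 ^ ((1 - α) * q) / ((1 - α) * q)) ^ (1 / q) := by
  set γ := (1 - α) * q with hγdef
  have hsplit : (2 * h) ^ γ / γ / h = 2 ^ γ / γ * h ^ (γ - 1) := by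
    rw [Real.mul_rpow zero_le_two hh.le, Real.rpow_sub_one hh.ne']
    ring
  have hexp : α + 1 / q - 1 / p + ((γ - 1) * (1 / q) + -(1 - 1 / p)) = 0 := by
    rw [hγdef]; field_simp; ring
  rw [hsplit, Real.mul_rpow (by positivity) (by positivity), ← Real.rpow_mul hh.le, one_div h,
    ← Real.rpow_neg_one h, ← Real.rpow_mul hh.le, neg_one_mul]
  have hcancel : h ^ (α + 1 / q - 1 / p) * (h ^ ((γ - 1) * (1 / q)) * h ^ (-(1 - 1 / p))) = 1 := by
    rw [← Real.rpow_add hh, ← Real.rpow_add hh, hexp, Real.rpow_zero]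
  linear_combination (2 ^ γ / γ) ^ (1 / q) * hcancel

lemma apqAlpha_summand_le {α p q : ℝ} (hα1 : α < 1) (hp : 1 < p) (hq : 0 < q) (a : ℝ) {h : ℝ}
    (hh : 0 < h) :
    ENNReal.ofReal h ^ (α + 1 / q - 1 / p) *
      (((∫⁻ t in Ico a (a + h), ENNReal.ofReal (powerTail ((1 - α) * q - 1) t)) /
          ENNReal.ofReal h) ^ (1 / q) *
        ((∫⁻ t in Ico a (a + h), ENNReal.ofReal (indicatorUnit t)) / ENNReal.ofReal h) ^
          (1 - 1 / p)) ≤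
    ENNReal.ofReal ((2 ^ ((1 - α) * q) / ((1 - α) * q)) ^ (1 / q)) := by
  have hγ : 0 < (1 - α) * q := mul_pos (by linarith) hq
  have hp' : 0 < 1 - 1 / p := by
    have : 1 / p < 1 := (div_lt_one (by linarith)).2 hp
    linarith
  rcases le_or_gt (a + h) 2 with hleft | hright
  · have hU : ∫⁻ t in Ico a (a + h), ENNReal.ofReal (powerTail ((1 - α) * q - 1) t) = 0 := by
      have hdisj : Disjoint (Ici 2) (Ico a (a + h)) :=
        disjoint_left.2 fun t h2 ht => (mem_Ici.1 h2).not_gt (ht.2.trans_le hleft)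
      rw [setLIntegral_powerTail, hdisj.inter_eq, Measure.restrict_empty, lintegral_zero_measure]
    rw [hU, ENNReal.zero_div, ENNReal.zero_rpow_of_pos (by positivity), zero_mul, mul_zero]
    exact zero_le
  rcases le_or_gt 1 a with hfar | hnear
  · have hS : ∫⁻ t in Ico a (a + h), ENNReal.ofReal (indicatorUnit t) = 0 := by
      rw [setLIntegral_indicatorUnit, Ico_inter_Ico, Ico_eq_empty (by simp [hfar]),
        measure_empty]
    rw [hS, ENNReal.zero_div, ENNReal.zero_rpow_of_pos hp', mul_zero, mul_zero]
    exact zero_le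
  have hU : ∫⁻ t in Ico a (a + h), ENNReal.ofReal (powerTail ((1 - α) * q - 1) t) ≤
      ENNReal.ofReal ((2 * h) ^ ((1 - α) * q) / ((1 - α) * q)) := by
    have hβ : -1 < (1 - α) * q - 1 := by linarith
    simpa only [sub_add_cancel] using setLIntegral_powerTail_le hβ (by linarith)
      fun t (ht : t ∈ Ico a (a + h)) => show t < 2 * h by linarith [ht.2]
  have hS : ∫⁻ t in Ico a (a + h), ENNReal.ofReal (indicatorUnit t) ≤ 1 := by
    rw [setLIntegral_indicatorUnit]
    exact (measure_mono inter_subset_left).trans (by simp)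
  calc _ ≤ ENNReal.ofReal h ^ (α + 1 / q - 1 / p) *
        ((ENNReal.ofReal ((2 * h) ^ ((1 - α) * q) / ((1 - α) * q)) / ENNReal.ofReal h) ^ (1 / q) *
          (1 / ENNReal.ofReal h) ^ (1 - 1 / p)) := by gcongr
    _ = _ := by
      rw [← ENNReal.ofReal_div_of_pos hh, ← ENNReal.ofReal_one, ← ENNReal.ofReal_div_of_pos hh,
        ENNReal.ofReal_rpow_of_pos hh, ENNReal.ofReal_rpow_of_pos (by positivity),
        ENNReal.ofReal_rpow_of_pos (by positivity), ← ENNReal.ofReal_mul (by positivity),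
        ← ENNReal.ofReal_mul (by positivity), apqAlpha_summand_bound_eq hq.ne' hh hγ]

lemma apqAlpha_powerTail_indicatorUnit_ne_top {α p q : ℝ} (hα1 : α < 1) (hp : 1 < p)
    (hq : 0 < q) :
    apqAlpha 1 α p q (fun x => powerTail ((1 - α) * q - 1) (x 0))
      (fun x => indicatorUnit (x 0)) ≠ ⊤ := by
  refine ne_top_of_le_ne_top
    (b := ENNReal.ofReal ((2 ^ ((1 - α) * q) / ((1 - α) * q)) ^ (1 / q))) ENNReal.ofReal_ne_top
    (iSup₂_le fun a h => iSup_le fun hh => ?_)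
  rw [Nat.cast_one, div_one, lavg, lavg, volume_cube_one,
    setLIntegral_cube_one (fun t => ENNReal.ofReal (powerTail _ t)),
    setLIntegral_cube_one (fun t => ENNReal.ofReal (indicatorUnit t))]
  exact apqAlpha_summand_le hα1 hp hq (a 0) hh

lemma ofReal_rpow_le_maxFn_indicatorUnit (α : ℝ) {x : Eucl 1} (hx : 0 ≤ x 0) :
    ENNReal.ofReal ((x 0 + 1) ^ (α - 1)) ≤ maxFn 1 α (fun y => indicatorUnit (y 0)) x := by
  have hh : 0 < x 0 + 1 := by linarith
  have hmem : x ∈ cube 1 (fun _ => 0) (x 0 + 1) := by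
    rw [cube_one_eq_preimage]
    exact ⟨hx, by simp [euclOneEquiv_apply]⟩
  have hmass : ∫⁻ y in cube 1 (fun _ => 0) (x 0 + 1), ENNReal.ofReal |indicatorUnit (y 0)| = 1 := by
    simp_rw [abs_of_nonneg (indicatorUnit_nonneg _)]
    rw [setLIntegral_cube_one (fun t => ENNReal.ofReal (indicatorUnit t)),
      setLIntegral_indicatorUnit, inter_eq_left.2 (Ico_subset_Ico_right (by linarith)),
      Real.volume_Ico, sub_zero, ENNReal.ofReal_one]
  refine le_trans (le_of_eq ?_) (le_maxFn α _ hh hmem)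
  rw [lavg, hmass, volume_cube_one, Nat.cast_one, div_one, ENNReal.ofReal_rpow_of_pos hh,
    one_div, ← ENNReal.ofReal_inv_of_pos hh, ← ENNReal.ofReal_mul (by positivity),
    Real.rpow_sub_one hh.ne', div_eq_mul_inv]

lemma two_rpow_mul_inv_le {c t : ℝ} (hc : c ≤ 0) (ht : 1 ≤ t) :
    2 ^ c * t⁻¹ ≤ (t + 1) ^ c * t ^ (-c - 1) := by
  have ht0 : 0 < t := by linarith
  calc 2 ^ c * t⁻¹ = (2 * t) ^ c * t ^ (-c - 1) := by
        rw [Real.mul_rpow zero_le_two ht0.le, mul_assoc, ← Real.rpow_add ht0,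
          show c + (-c - 1) = -1 by ring, Real.rpow_neg_one]
    _ ≤ (t + 1) ^ c * t ^ (-c - 1) := by
        gcongr ?_ * _
        exact Real.rpow_le_rpow_of_nonpos (by linarith) (by linarith) hc

lemma ofReal_two_rpow_mul_inv_le_maxFn {α q : ℝ} (hα1 : α < 1) (hq : 0 < q) {x : Eucl 1}
    (hx : 2 ≤ x 0) :
    ENNReal.ofReal (2 ^ ((α - 1) * q) * (x 0)⁻¹) ≤
      maxFn 1 α (fun y => indicatorUnit (y 0)) x ^ q *
        ENNReal.ofReal (powerTail ((1 - α) * q - 1) (x 0)) := by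
  have hx1 : 0 < x 0 + 1 := by linarith
  calc ENNReal.ofReal (2 ^ ((α - 1) * q) * (x 0)⁻¹)
      ≤ ENNReal.ofReal ((x 0 + 1) ^ (α - 1)) ^ q *
          ENNReal.ofReal (powerTail ((1 - α) * q - 1) (x 0)) := by
        rw [powerTail, indicator_of_mem (show x 0 ∈ Ici 2 from hx),
          ENNReal.ofReal_rpow_of_pos (by positivity),
          ← Real.rpow_mul hx1.le, ← ENNReal.ofReal_mul (by positivity),
          show (1 - α) * q - 1 = -((α - 1) * q) - 1 by ring]
        exact ENNReal.ofReal_le_ofReal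
          (two_rpow_mul_inv_le (by nlinarith) (by linarith))
    _ ≤ _ := by
        gcongr
        exact ofReal_rpow_le_maxFn_indicatorUnit α (by linarith)

lemma lintegral_maxFn_rpow_mul_powerTail_eq_top {α q : ℝ} (hα1 : α < 1) (hq : 0 < q) :
    ∫⁻ x, maxFn 1 α (fun y => indicatorUnit (y 0)) x ^ q *
      ENNReal.ofReal (powerTail ((1 - α) * q - 1) (x 0)) = ⊤ := by
  have hc : 0 < (2 : ℝ) ^ ((α - 1) * q) := by positivity
  refine eq_top_mono ?_ (ENNReal.mul_top (ENNReal.ofReal_pos.2 hc).ne')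
  calc ENNReal.ofReal (2 ^ ((α - 1) * q)) * ⊤
      = ∫⁻ t in Ici 2, ENNReal.ofReal (2 ^ ((α - 1) * q) * t⁻¹) := by
        simp_rw [ENNReal.ofReal_mul hc.le]
        rw [lintegral_const_mul' _ _ ENNReal.ofReal_ne_top, lintegral_Ici_inv_eq_top zero_le_two]
    _ = ∫⁻ x in euclOneEquiv ⁻¹' Ici 2, ENNReal.ofReal (2 ^ ((α - 1) * q) * (x 0)⁻¹) :=
        (setLIntegral_preimage_euclOneEquiv (fun t => ENNReal.ofReal (2 ^ ((α - 1) * q) * t⁻¹))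
          _).symm
    _ ≤ ∫⁻ x in euclOneEquiv ⁻¹' Ici 2, maxFn 1 α (fun y => indicatorUnit (y 0)) x ^ q *
          ENNReal.ofReal (powerTail ((1 - α) * q - 1) (x 0)) :=
        setLIntegral_mono' (euclOneEquiv.measurable measurableSet_Ici) fun x hx =>
          ofReal_two_rpow_mul_inv_le_maxFn hα1 hq hx
    _ ≤ _ := setLIntegral_le_lintegral _ _

theorem statement14_general (α p q : ℝ) (hα1 : α < 1)
    (hp : 1 < p) (hpq : p ≤ q) :
    ∃ u σ f : Eucl 1 → ℝ, Weight u ∧ Weight σ ∧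
      apqAlpha 1 α p q u σ ≠ ⊤ ∧
      Measurable f ∧ (∀ x, 0 ≤ f x) ∧
      (∫⁻ x, ENNReal.ofReal (f x) ^ p * ENNReal.ofReal (σ x)) < ⊤ ∧
      (∫⁻ x, (maxFn 1 α (fun y => f y * σ y) x) ^ q * ENNReal.ofReal (u x)) = ⊤ := by
  have hq : 0 < q := by linarith
  refine ⟨fun x => powerTail ((1 - α) * q - 1) (x 0), fun x => indicatorUnit (x 0), fun _ => 1,
    weight_powerTail _, weight_indicatorUnit,
    apqAlpha_powerTail_indicatorUnit_ne_top hα1 hp hq, measurable_const, fun _ => zero_le_one,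
    ?_, ?_⟩
  · simp only [ENNReal.ofReal_one, ENNReal.one_rpow, one_mul]
    rw [lintegral_comp_euclOneEquiv (fun t => ENNReal.ofReal (indicatorUnit t)),
      ← setLIntegral_univ, setLIntegral_indicatorUnit]
    exact (measure_mono inter_subset_left).trans_lt measure_Ico_lt_top
  · simpa only [one_mul] using lintegral_maxFn_rpow_mul_powerTail_eq_top hα1 hq

/-- `A_{p,q}^α` is not sufficient for the strong type
inequality for the fractional maximal operator; counterexample on `ℝ`. -/
theorem statement14 (α p q : ℝ) (hα0 : 0 < α) (hα1 : α < 1)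
    (hp : 1 < p) (hpq : p ≤ q) :
    ∃ u σ f : Eucl 1 → ℝ, Weight u ∧ Weight σ ∧
      apqAlpha 1 α p q u σ ≠ ⊤ ∧
      Measurable f ∧ (∀ x, 0 ≤ f x) ∧
      (∫⁻ x, ENNReal.ofReal (f x) ^ p * ENNReal.ofReal (σ x)) < ⊤ ∧
      (∫⁻ x, (maxFn 1 α (fun y => f y * σ y) x) ^ q * ENNReal.ofReal (u x)) = ⊤ :=
  statement14_general α p q hα1 hp hpq
end
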